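/- There do not exist constants c, c' such that w := c D_a α_μ D^a ψ + c' α_μ ψ satisfies (D² + n² - 2n) w = 4 n² (n-1) α_μ ψ for n ≥ 2, where ψ = C(α_{μ_1}···α_{μ_{n-1}}) and α_μ, α_{μ_i} are asymptotic translations on the unit hyperboloid. Specifically, substituting w into the left side yields 2[(n+1)c + c'][D_a α_μ D^a ψ + (n-1) α_μ ψ], which can never equal 4 n² (n-1) α_μ ψ for n ≥ 2. -/

import Mathlib

/-
Common extrinsic setup (used in all files).

We work in ℝ⁴ with the Minkowski inner product of signature (+,+,+,-) (CONTEXT 0).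
`Hb` is the unit hyperboloid H = {x | ⟨x,x⟩ = 1}, `Ur` the open exterior region
{⟨x,x⟩ > 0} on which fields on H are represented (only their restriction to H matters,
since every intrinsic operator below first composes with the radial retraction `ret`,
i.e. with the 0-homogeneous extension).

Standard facts about hypersurfaces give the following *definitions* of the intrinsic
(Levi-Civita) operators of the induced metric q on H in terms of ambient derivatives of
the 0-homogeneous extension:
 * the induced metric q at x ∈ H is the restriction of ⟨·,·⟩ to the tangent space
   {u | ⟨x,u⟩ = 0};
 * the intrinsic Hessian D_aD_b f on tangent vectors is the ambient Hessian of the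
   0-homogeneous extension (the second-fundamental-form correction vanishes because the
   0-homogeneous extension has radial derivative 0);
 * the intrinsic gradient D^a f is the ambient Minkowski gradient of the 0-homogeneous
   extension (automatically tangent);
 * the intrinsic Laplacian D² f = q^{ab} D_aD_b f is the ambient wave operator applied
   to the 0-homogeneous extension;
 * the intrinsic divergence D_a V^a of a tangent field is the ambient divergence of its
   0-homogeneous extension.
-/

noncomputable section

open scoped BigOperators

/-- ℝ⁴. -/
abbrev E4 : Type := Fin 4 → ℝ

/-- The signature (+,+,+,-). -/
def sg (i : Fin 4) : ℝ := if i = 3 then -1 else 1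

/-- The Minkowski inner product ⟨x,y⟩ = x₀y₀ + x₁y₁ + x₂y₂ − x₃y₃. -/
def mk4 (x y : E4) : ℝ := ∑ i, sg i * x i * y i

/-- The unit hyperboloid H = {x | ⟨x,x⟩ = 1}. -/
def Hb : Set E4 := {x | mk4 x x = 1}

/-- The exterior region {x | ⟨x,x⟩ > 0}. -/
def Ur : Set E4 := {x | 0 < mk4 x x}

/-- Radial retraction of the exterior region onto H. -/
def ret (x : E4) : E4 := (Real.sqrt (mk4 x x))⁻¹ • x

/-- 0-homogeneous extension of (the H-restriction of) a scalar field. -/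
def Hz (f : E4 → ℝ) : E4 → ℝ := fun x => f (ret x)

/-- Standard basis of ℝ⁴. -/
def bas (i : Fin 4) : E4 := fun j => if j = i then 1 else 0

/-- Partial derivative ∂_i. -/
def pd (f : E4 → ℝ) (i : Fin 4) (x : E4) : ℝ := fderiv ℝ f x (bas i)

/-- Ambient Minkowski gradient (index raised with the Minkowski metric). -/
def mgrad (f : E4 → ℝ) (x : E4) : E4 := fun i => sg i * pd f i x

/-- Intrinsic gradient D^a f on H. -/
def grH (f : E4 → ℝ) (x : E4) : E4 := mgrad (Hz f) x

/-- Ambient Minkowski wave operator □ = ∂² + ∂² + ∂² − ∂². -/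
def boxm (f : E4 → ℝ) (x : E4) : ℝ := ∑ i, sg i * pd (pd f i) i x

/-- Intrinsic Laplacian D² f = q^{ab} D_a D_b f on H. -/
def D2H (f : E4 → ℝ) (x : E4) : ℝ := boxm (Hz f) x

/-- 0-homogeneous extension of a vector field on H. -/
def HzV (V : E4 → E4) : E4 → E4 := fun x => V (ret x)

/-- Intrinsic divergence D_a V^a on H of a tangent vector field. -/
def divH (V : E4 → E4) (x : E4) : ℝ := ∑ i, fderiv ℝ (HzV V) x (bas i) i

/-- `u` is tangent to H at `x`. -/
def Tang (x u : E4) : Prop := mk4 x u = 0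

/-- Intrinsic Hessian D_a D_b f on H, evaluated on (tangent) vectors u, v. -/
def HessH (f : E4 → ℝ) (x u v : E4) : ℝ :=
  fderiv ℝ (fun y => fderiv ℝ (Hz f) y v) x u

/-- The linear field α_k = ⟨k,·⟩; its restriction to H is an asymptotic translation. -/
def trfn (k : E4) : E4 → ℝ := fun x => mk4 k x

/-- `f` (restricted to H) is an asymptotic translation: D_a D_b f + f q_ab = 0. -/
def IsATrans (f : E4 → ℝ) : Prop :=
  ContDiffOn ℝ (⊤ : ℕ∞) f Ur ∧
  ∀ x ∈ Hb, ∀ u v : E4, Tang x u → Tang x v →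
    HessH f x u v + f x * mk4 u v = 0

/-- Index helper: the σ-permuted list of translation vectors, as a total function on ℕ. -/
def kk (N : ℕ) (k : ℕ → E4) (σ : Equiv.Perm (Fin N)) (j : ℕ) : E4 :=
  if h : j < N then k ((σ ⟨j, h⟩ : Fin N) : ℕ) else 0

/-- The totally symmetric trace-free part C(α_{k 0} ⋯ α_{k (N-1)}) of the product of the
N asymptotic translations α_{k j} = ⟨k j, ·⟩, with concrete index vectors k j ∈ ℝ⁴ ≅ T,
as a function on H (footnote 22 of the paper; η_{μν} ↦ ⟨k i, k j⟩, N = n−1):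
C = Σ_{m≤[n/2]} (−1/4)^m binom(n−m−1, m) η_{(μ₁μ₂}⋯η_{μ_{2m-1}μ_{2m}} α_{μ_{2m+1}}⋯α_{μ_{n-1})}. -/
def Cfun (N : ℕ) (k : ℕ → E4) (x : E4) : ℝ :=
  (Nat.factorial N : ℝ)⁻¹ *
    ∑ σ : Equiv.Perm (Fin N), ∑ m ∈ Finset.range (N / 2 + 1),
      (-(1 : ℝ)/4) ^ m * (Nat.choose (N - m) m : ℝ) *
      (∏ j ∈ Finset.range m, mk4 (kk N k σ (2*j)) (kk N k σ (2*j+1))) *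
      (∏ j ∈ Finset.Ico (2*m) N, mk4 (kk N k σ j) x)

namespace S18

lemma sg_cases (i : Fin 4) : sg i = 1 ∨ sg i = -1 := by
  unfold sg; split <;> simp

lemma sg_sq (i : Fin 4) : sg i * sg i = 1 := by
  rcases sg_cases i with h | h <;> rw [h] <;> norm_num

lemma mk4_smul_right (a : E4) (t : ℝ) (x : E4) : mk4 a (t • x) = t * mk4 a x := by
  unfold mk4
  rw [Finset.mul_sum]
  refine Finset.sum_congr rfl fun i _ => ?_
  simp [Pi.smul_apply, smul_eq_mul]; ring

lemma mk4_bas (a : E4) (i : Fin 4) : mk4 a (bas i) = sg i * a i := by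
  unfold mk4 bas
  rw [Finset.sum_eq_single i]
  · simp
  · intro j _ hj; simp [hj]
  · simp

/-- the Minkowski inner product with `a` as a continuous linear map -/
def mlin (a : E4) : E4 →L[ℝ] ℝ :=
  ∑ i, (sg i * a i) • (ContinuousLinearMap.proj (R := ℝ) (φ := fun _ : Fin 4 => ℝ) i)

lemma mlin_apply (a w : E4) : mlin a w = mk4 a w := by
  unfold mlin mk4
  rw [ContinuousLinearMap.sum_apply]
  refine Finset.sum_congr rfl fun i _ => ?_
  simp [smul_eq_mul]

lemma hasFDerivAt_mk4 (a x : E4) : HasFDerivAt (fun y => mk4 a y) (mlin a) x := by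
  have : (fun y => mk4 a y) = fun y => mlin a y := by
    funext y; rw [mlin_apply]
  rw [this]
  exact (mlin a).hasFDerivAt

lemma hasFDerivAt_R (x : E4) : HasFDerivAt (fun y : E4 => mk4 y y) ((2:ℝ) • mlin x) x := by
  have h : ∀ i : Fin 4, HasFDerivAt (fun y : E4 => sg i * y i * y i)
      (((2 * sg i * x i)) • (ContinuousLinearMap.proj (R := ℝ) (φ := fun _ : Fin 4 => ℝ) i)) x := by
    intro i
    have hp : HasFDerivAt (fun y : E4 => y i)
        (ContinuousLinearMap.proj (R := ℝ) (φ := fun _ : Fin 4 => ℝ) i) x :=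
      (ContinuousLinearMap.proj (R := ℝ) (φ := fun _ : Fin 4 => ℝ) i).hasFDerivAt
    have := ((hp.const_mul (sg i)).fun_mul hp)
    refine this.congr_fderiv (Eq.symm ?_)
    ext w
    simp [smul_eq_mul]
    ring
  have hsum := HasFDerivAt.fun_sum (fun i (_ : i ∈ Finset.univ) => h i)
  have : (fun y : E4 => mk4 y y) = fun y : E4 => ∑ i, sg i * y i * y i := by
    funext y; rfl
  rw [this]
  refine hsum.congr_fderiv (Eq.symm ?_)
  ext w
  simp [mlin, smul_eq_mul]
  rw [Finset.mul_sum]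
  refine Finset.sum_congr rfl fun i _ => ?_
  ring


/-- the conformal factor (√⟨x,x⟩)⁻¹ -/
def Sf (x : E4) : ℝ := (Real.sqrt (mk4 x x))⁻¹

lemma hasFDerivAt_npow {f : E4 → ℝ} {f' : E4 →L[ℝ] ℝ} {x : E4}
    (hf : HasFDerivAt f f' x) (n : ℕ) :
    HasFDerivAt (fun y => f y ^ n) (((n : ℝ) * f x ^ (n-1)) • f') x :=
  (hasDerivAt_pow n (f x)).comp_hasFDerivAt x hf

lemma hasFDerivAt_inv' {f : E4 → ℝ} {f' : E4 →L[ℝ] ℝ} {x : E4}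
    (hf : HasFDerivAt f f' x) (hx : f x ≠ 0) :
    HasFDerivAt (fun y => (f y)⁻¹) ((-(f x ^ 2)⁻¹) • f') x :=
  (hasDerivAt_inv hx).comp_hasFDerivAt x hf

lemma hasFDerivAt_S {x : E4} (h : 0 < mk4 x x) :
    HasFDerivAt Sf ((-(Sf x)^3) • mlin x) x := by
  have hsq : Real.sqrt (mk4 x x) ≠ 0 := by
    positivity
  have hR := hasFDerivAt_R x
  have hs : HasFDerivAt (fun y : E4 => Real.sqrt (mk4 y y))
      ((1 / (2 * Real.sqrt (mk4 x x))) • ((2:ℝ) • mlin x)) x :=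
    HasFDerivAt.sqrt hR (ne_of_gt h)
  have hinv := hasFDerivAt_inv' hs hsq
  refine hinv.congr_fderiv (Eq.symm ?_)
  ext w
  simp only [Sf, ContinuousLinearMap.smul_apply, smul_eq_mul]
  rw [div_eq_mul_inv]
  have h3 : Real.sqrt (mk4 x x) ^ 2 ≠ 0 := pow_ne_zero 2 hsq
  have h4 : Real.sqrt (mk4 x x) ^ 2 = mk4 x x := Real.sq_sqrt h.le
  field_simp

section monomials

variable (l l' : E4)

/-- scalar monomial u^a v^b S^m -/
def T (a b m : ℕ) (x : E4) : ℝ := mk4 l x ^ a * mk4 l' x ^ b * Sf x ^ m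

/-- its derivative as a CLM -/
def DT (a b m : ℕ) (x : E4) : E4 →L[ℝ] ℝ :=
  ((a : ℝ) * T l l' (a-1) b m x) • mlin l
  + ((b : ℝ) * T l l' a (b-1) m x) • mlin l'
  + (-(m : ℝ) * T l l' a b (m+2) x) • mlin x

lemma hasFDerivAt_T {x : E4} (h : 0 < mk4 x x) (a b m : ℕ) :
    HasFDerivAt (T l l' a b m) (DT l l' a b m x) x := by
  have hu := hasFDerivAt_npow (hasFDerivAt_mk4 l x) a
  have hv := hasFDerivAt_npow (hasFDerivAt_mk4 l' x) b
  have hs := hasFDerivAt_npow (hasFDerivAt_S h) m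
  have := (hu.fun_mul hv).fun_mul hs
  refine this.congr_fderiv (Eq.symm ?_)
  ext w
  simp only [DT, T, ContinuousLinearMap.add_apply, ContinuousLinearMap.smul_apply,
    smul_eq_mul, mlin_apply]
  rcases m with _ | m
  · simp; ring
  · simp only [Nat.add_sub_cancel]
    push_cast
    have hp : Sf x ^ (m + 1 + 2) = Sf x ^ m * Sf x ^ 3 := by ring
    rw [hp]
    ring

/-- first-derivative scalar formula -/
def PT (a b m : ℕ) (i : Fin 4) (x : E4) : ℝ :=
  (a:ℝ) * T l l' (a-1) b m x * (sg i * l i)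
  + (b:ℝ) * T l l' a (b-1) m x * (sg i * l' i)
  + (-(m:ℝ) * T l l' a b (m+2) x) * (sg i * x i)

lemma DT_bas (a b m : ℕ) (i : Fin 4) (x : E4) :
    DT l l' a b m x (bas i) = PT l l' a b m i x := by
  simp only [DT, PT, ContinuousLinearMap.add_apply, ContinuousLinearMap.smul_apply,
    smul_eq_mul, mlin_apply, mk4_bas]
  try ring

lemma pd_T {x : E4} (h : 0 < mk4 x x) (a b m : ℕ) (i : Fin 4) :
    pd (T l l' a b m) i x = PT l l' a b m i x := by
  unfold pd
  rw [(hasFDerivAt_T l l' h a b m).fderiv, DT_bas]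

/-- second-derivative CLM for PT -/
def LPT (a b m : ℕ) (i : Fin 4) (x : E4) : E4 →L[ℝ] ℝ :=
  ((a:ℝ) * (sg i * l i)) • DT l l' (a-1) b m x
  + ((b:ℝ) * (sg i * l' i)) • DT l l' a (b-1) m x
  + (-(m:ℝ) * (sg i * x i)) • DT l l' a b (m+2) x
  + (-(m:ℝ) * T l l' a b (m+2) x * sg i) •
      (ContinuousLinearMap.proj (R := ℝ) (φ := fun _ : Fin 4 => ℝ) i)

lemma hasFDerivAt_PT {x : E4} (h : 0 < mk4 x x) (a b m : ℕ) (i : Fin 4) :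
    HasFDerivAt (PT l l' a b m i) (LPT l l' a b m i x) x := by
  have hp : HasFDerivAt (fun y : E4 => y i)
      (ContinuousLinearMap.proj (R := ℝ) (φ := fun _ : Fin 4 => ℝ) i) x :=
    (ContinuousLinearMap.proj (R := ℝ) (φ := fun _ : Fin 4 => ℝ) i).hasFDerivAt
  have h1 := ((hasFDerivAt_T l l' h (a-1) b m).const_mul ((a:ℝ))).mul_const (sg i * l i)
  have h2 := ((hasFDerivAt_T l l' h a (b-1) m).const_mul ((b:ℝ))).mul_const (sg i * l' i)
  have h3 := ((hasFDerivAt_T l l' h a b (m+2)).const_mul (-(m:ℝ))).fun_mul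
      (hp.const_mul (sg i))
  have := (h1.fun_add h2).fun_add h3
  refine this.congr_fderiv (Eq.symm ?_)
  ext w
  simp only [LPT, ContinuousLinearMap.add_apply, ContinuousLinearMap.smul_apply,
    smul_eq_mul, ContinuousLinearMap.proj_apply]
  ring

lemma continuous_R : Continuous (fun x : E4 => mk4 x x) := by
  unfold mk4
  fun_prop

lemma isOpen_pos : IsOpen {x : E4 | 0 < mk4 x x} :=
  isOpen_lt continuous_const continuous_R

lemma pd_congr {f g : E4 → ℝ} {x : E4} (hfg : ∀ y, 0 < mk4 y y → f y = g y)
    (h : 0 < mk4 x x) (i : Fin 4) : pd f i x = pd g i x := by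
  unfold pd
  rw [Filter.EventuallyEq.fderiv_eq
    (Filter.eventuallyEq_of_mem (isOpen_pos.mem_nhds h) hfg)]

/-- second partial of a two-term combination -/
lemma pd_pd_comb {x : E4} (h : 0 < mk4 x x) (α β : ℝ) (a b m a' b' m' : ℕ) (i : Fin 4) :
    pd (pd (fun y => α * T l l' a b m y + β * T l l' a' b' m' y) i) i x
      = α * LPT l l' a b m i x (bas i) + β * LPT l l' a' b' m' i x (bas i) := by
  have step1 : ∀ y, 0 < mk4 y y →
      pd (fun y => α * T l l' a b m y + β * T l l' a' b' m' y) i y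
        = α * PT l l' a b m i y + β * PT l l' a' b' m' i y := by
    intro y hy
    have hC := ((hasFDerivAt_T l l' hy a b m).const_mul α).fun_add
      ((hasFDerivAt_T l l' hy a' b' m').const_mul β)
    unfold pd
    rw [hC.fderiv]
    simp only [ContinuousLinearMap.add_apply, ContinuousLinearMap.smul_apply,
      smul_eq_mul, DT_bas]
  rw [pd_congr step1 h i]
  have hC2 := ((hasFDerivAt_PT l l' h a b m i).const_mul α).fun_add
    ((hasFDerivAt_PT l l' h a' b' m' i).const_mul β)
  unfold pd
  rw [hC2.fderiv]
  simp only [ContinuousLinearMap.add_apply, ContinuousLinearMap.smul_apply, smul_eq_mul]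

lemma sg0 : sg 0 = 1 := rfl
lemma sg1 : sg 1 = 1 := rfl
lemma sg2 : sg 2 = 1 := rfl
lemma sg3 : sg 3 = -1 := rfl

lemma sum_sg_sq : ∑ i : Fin 4, sg i * sg i = 4 := by
  rw [Fin.sum_univ_four, sg0, sg1, sg2, sg3]
  norm_num

lemma TU {x : E4} (a b m : ℕ) :
    (a:ℝ) * T l l' (a-1) b m x * mk4 l x = (a:ℝ) * T l l' a b m x := by
  rcases a with _ | a
  · simp
  · simp only [Nat.add_sub_cancel, T]
    push_cast
    ring

lemma TV {x : E4} (a b m : ℕ) :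
    (b:ℝ) * T l l' a (b-1) m x * mk4 l' x = (b:ℝ) * T l l' a b m x := by
  rcases b with _ | b
  · simp
  · simp only [Nat.add_sub_cancel, T]
    push_cast
    ring

lemma TR {x : E4} (h : 0 < mk4 x x) (a b m : ℕ) :
    T l l' a b (m+4) x * mk4 x x = T l l' a b (m+2) x := by
  have hs : Sf x ^ 2 * mk4 x x = 1 := by
    have : Real.sqrt (mk4 x x) ^ 2 = mk4 x x := Real.sq_sqrt h.le
    rw [Sf, ← this]
    field_simp
    rw [Real.sqrt_sq (Real.sqrt_nonneg _)]
  simp only [T]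
  have : Sf x ^ (m+4) = Sf x ^ (m+2) * Sf x ^ 2 := by ring
  rw [this]
  linear_combination (mk4 l x ^ a * mk4 l' x ^ b * Sf x ^ (m+2)) * hs

/-- the contracted second derivative of a monomial -/
lemma sum_sg_LPT {x : E4} (h : 0 < mk4 x x) (h1 : mk4 l l = 0) (h2 : mk4 l' l' = 0)
    (a b m : ℕ) :
    ∑ i, sg i * LPT l l' a b m i x (bas i)
      = 2*(a:ℝ)*(b:ℝ)*(mk4 l l') * T l l' (a-1) (b-1) m x
        + ((m:ℝ)*m - 2*m*a - 2*m*b - 2*m) * T l l' a b (m+2) x := by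
  have expand : ∀ i : Fin 4, sg i * LPT l l' a b m i x (bas i)
      = ((a:ℝ)*((a:ℝ)-1) * T l l' (a-1-1) b m x) * (sg i * l i * l i)
        + (2*(a:ℝ)*(b:ℝ) * T l l' (a-1) (b-1) m x) * (sg i * l i * l' i)
        + (-2*(a:ℝ)*(m:ℝ) * T l l' (a-1) b (m+2) x) * (sg i * l i * x i)
        + ((b:ℝ)*((b:ℝ)-1) * T l l' a (b-1-1) m x) * (sg i * l' i * l' i)
        + (-2*(b:ℝ)*(m:ℝ) * T l l' a (b-1) (m+2) x) * (sg i * l' i * x i)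
        + ((m:ℝ)*((m:ℝ)+2) * T l l' a b (m+4) x) * (sg i * x i * x i)
        + (-(m:ℝ) * T l l' a b (m+2) x) * (sg i * sg i) := by
    intro i
    have hb : bas i i = 1 := by simp [bas]
    simp only [LPT, ContinuousLinearMap.add_apply, ContinuousLinearMap.smul_apply,
      smul_eq_mul, ContinuousLinearMap.proj_apply, DT_bas, PT, hb]
    rcases a with _ | a <;> rcases b with _ | b <;>
      rcases sg_cases i with hs | hs <;>
      rw [hs] <;> push_cast [Nat.add_sub_cancel, Nat.zero_sub] <;> ring
  rw [Finset.sum_congr rfl (fun i _ => expand i)]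
  simp only [Finset.sum_add_distrib, ← Finset.mul_sum]
  have e1 : ∑ i, sg i * l i * l i = mk4 l l := rfl
  have e2 : ∑ i, sg i * l i * l' i = mk4 l l' := rfl
  have e3 : ∑ i, sg i * l i * x i = mk4 l x := rfl
  have e4 : ∑ i, sg i * l' i * l' i = mk4 l' l' := rfl
  have e5 : ∑ i, sg i * l' i * x i = mk4 l' x := rfl
  have e6 : ∑ i, sg i * x i * x i = mk4 x x := rfl
  rw [e1, e2, e3, e4, e5, e6, sum_sg_sq, h1, h2]
  linear_combination (-2*(m:ℝ)) * TU l l' (x := x) a b (m+2)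
    + (-2*(m:ℝ)) * TV l l' (x := x) a b (m+2)
    + ((m:ℝ)*((m:ℝ)+2)) * TR l l' h a b m

lemma boxm_comb {x : E4} (h : 0 < mk4 x x) (h1 : mk4 l l = 0) (h2 : mk4 l' l' = 0)
    (α β : ℝ) (a b m a' b' m' : ℕ) :
    boxm (fun y => α * T l l' a b m y + β * T l l' a' b' m' y) x
      = α * (2*(a:ℝ)*(b:ℝ)*(mk4 l l') * T l l' (a-1) (b-1) m x
          + ((m:ℝ)*m - 2*m*a - 2*m*b - 2*m) * T l l' a b (m+2) x)
        + β * (2*(a':ℝ)*(b':ℝ)*(mk4 l l') * T l l' (a'-1) (b'-1) m' x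
          + ((m':ℝ)*m' - 2*m'*a' - 2*m'*b' - 2*m') * T l l' a' b' (m'+2) x) := by
  unfold boxm
  rw [Finset.sum_congr rfl (fun i _ => by
    rw [pd_pd_comb l l' h α β a b m a' b' m' i])]
  rw [← sum_sg_LPT l l' h h1 h2 a b m, ← sum_sg_LPT l l' h h1 h2 a' b' m']
  rw [Finset.mul_sum, Finset.mul_sum, ← Finset.sum_add_distrib]
  exact Finset.sum_congr rfl fun i _ => by ring

end monomials

lemma Sf_sq {x : E4} (h : 0 < mk4 x x) : Sf x ^ 2 * mk4 x x = 1 := by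
  have hq : Real.sqrt (mk4 x x) ^ 2 = mk4 x x := Real.sq_sqrt h.le
  rw [Sf, ← hq]
  field_simp
  rw [Real.sqrt_sq (Real.sqrt_nonneg _)]

lemma boxm_congr {f g : E4 → ℝ} {x : E4} (hfg : ∀ y, 0 < mk4 y y → f y = g y)
    (h : 0 < mk4 x x) : boxm f x = boxm g x := by
  unfold boxm
  refine Finset.sum_congr rfl fun i _ => ?_
  rw [pd_congr (fun y hy => pd_congr hfg hy i) h i]

lemma Hz_trfn (a : E4) : Hz (trfn a) = fun x => Sf x * mk4 a x := by
  funext x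
  simp [Hz, trfn, ret, Sf, mk4_smul_right]

lemma Cfun_null {N : ℕ} {l : E4} (h1 : mk4 l l = 0) :
    Cfun N (fun _ => l) = fun x => (mk4 l x) ^ N := by
  funext x
  unfold Cfun
  have hkk : ∀ (σ : Equiv.Perm (Fin N)) (j : ℕ), j < N → kk N (fun _ => l) σ j = l := by
    intro σ j hj; simp [kk, hj]
  have inner : ∀ σ : Equiv.Perm (Fin N),
      (∑ m ∈ Finset.range (N / 2 + 1),
        (-(1 : ℝ)/4) ^ m * (Nat.choose (N - m) m : ℝ) *
        (∏ j ∈ Finset.range m, mk4 (kk N (fun _ => l) σ (2*j)) (kk N (fun _ => l) σ (2*j+1))) *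
        (∏ j ∈ Finset.Ico (2*m) N, mk4 (kk N (fun _ => l) σ j) x)) = (mk4 l x) ^ N := by
    intro σ
    rw [Finset.sum_eq_single 0]
    · have hprod : (∏ j ∈ Finset.Ico (2*0) N, mk4 (kk N (fun _ => l) σ j) x)
          = (mk4 l x) ^ N := by
        rw [Finset.prod_congr rfl (fun j hj => by
          rw [hkk σ j (Finset.mem_Ico.mp hj).2])]
        rw [Finset.prod_const, Nat.card_Ico]
        simp
      rw [hprod]
      simp
    · intro m hm hm0
      have hm1 : 1 ≤ m := Nat.one_le_iff_ne_zero.mpr hm0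
      have hmN : 2 * m ≤ N := by
        have := Finset.mem_range.mp hm
        omega
      have h0N : 0 < N := by omega
      have h1N : 1 < N := by omega
      have : (∏ j ∈ Finset.range m, mk4 (kk N (fun _ => l) σ (2*j)) (kk N (fun _ => l) σ (2*j+1))) = 0 := by
        refine Finset.prod_eq_zero (Finset.mem_range.mpr hm1) ?_
        rw [hkk σ (2*0) (by omega), hkk σ (2*0+1) (by omega), h1]
      rw [this]
      ring
    · simp
  rw [Finset.sum_congr rfl (fun σ _ => inner σ), Finset.sum_const]
  simp only [Finset.card_univ, Fintype.card_perm, Fintype.card_fin, smul_eq_mul, nsmul_eq_mul]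
  rw [← mul_assoc, inv_mul_cancel₀ (by exact_mod_cast Nat.factorial_ne_zero N), one_mul]

lemma Hz_Cfun {N : ℕ} {l : E4} (h1 : mk4 l l = 0) :
    Hz (Cfun N (fun _ => l)) = fun x => (Sf x * mk4 l x) ^ N := by
  funext x
  rw [Hz, Cfun_null h1]
  simp [ret, Sf, mk4_smul_right]

lemma grH_trfn {y : E4} (h : 0 < mk4 y y) (a : E4) :
    grH (trfn a) y = fun i => Sf y * a i - Sf y ^ 3 * mk4 a y * y i := by
  funext i
  unfold grH mgrad
  rw [Hz_trfn]
  have hW : HasFDerivAt (fun z => Sf z * mk4 a z)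
      (Sf y • mlin a + mk4 a y • ((-(Sf y)^3) • mlin y)) y :=
    (hasFDerivAt_S h).mul (hasFDerivAt_mk4 a y)
  unfold pd
  rw [hW.fderiv]
  simp only [ContinuousLinearMap.add_apply, ContinuousLinearMap.smul_apply,
    smul_eq_mul, mlin_apply, mk4_bas]
  rcases sg_cases i with hs | hs <;> rw [hs] <;> ring

lemma grH_Cfun {N : ℕ} {y : E4} {l : E4} (h : 0 < mk4 y y) (h1 : mk4 l l = 0) :
    grH (Cfun N (fun _ => l)) y
      = fun i => (N:ℝ) * (Sf y * mk4 l y) ^ (N-1)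
          * (Sf y * l i - Sf y ^ 3 * mk4 l y * y i) := by
  funext i
  unfold grH mgrad
  rw [Hz_Cfun h1]
  have hW : HasFDerivAt (fun z => Sf z * mk4 l z)
      (Sf y • mlin l + mk4 l y • ((-(Sf y)^3) • mlin y)) y :=
    (hasFDerivAt_S h).mul (hasFDerivAt_mk4 l y)
  have hWN := hasFDerivAt_npow hW N
  unfold pd
  rw [hWN.fderiv]
  simp only [ContinuousLinearMap.add_apply, ContinuousLinearMap.smul_apply,
    smul_eq_mul, mlin_apply, mk4_bas]
  rcases sg_cases i with hs | hs <;> rw [hs] <;> ring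

lemma mk4_grads {N : ℕ} {y : E4} {l : E4} (h : 0 < mk4 y y) (h1 : mk4 l l = 0) (a : E4) :
    mk4 (grH (trfn a) y) (grH (Cfun N (fun _ => l)) y)
      = (N:ℝ) * (Sf y * mk4 l y) ^ (N-1)
          * (Sf y ^ 2 * mk4 a l - Sf y ^ 4 * mk4 l y * mk4 a y) := by
  rw [grH_trfn h a, grH_Cfun h h1]
  have expand : ∀ i : Fin 4,
      sg i * (Sf y * a i - Sf y ^ 3 * mk4 a y * y i)
        * ((N:ℝ) * (Sf y * mk4 l y) ^ (N-1) * (Sf y * l i - Sf y ^ 3 * mk4 l y * y i))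
      = ((N:ℝ) * (Sf y * mk4 l y) ^ (N-1) * (Sf y * Sf y)) * (sg i * a i * l i)
        + (-(N:ℝ) * (Sf y * mk4 l y) ^ (N-1) * (Sf y * Sf y ^ 3 * mk4 l y)) * (sg i * a i * y i)
        + (-(N:ℝ) * (Sf y * mk4 l y) ^ (N-1) * (Sf y ^ 3 * mk4 a y * Sf y)) * (sg i * l i * y i)
        + ((N:ℝ) * (Sf y * mk4 l y) ^ (N-1) * (Sf y ^ 3 * mk4 a y * Sf y ^ 3 * mk4 l y)) * (sg i * y i * y i) := by
    intro i
    ring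
  have hmk : mk4 (fun i => Sf y * a i - Sf y ^ 3 * mk4 a y * y i)
      (fun i => (N:ℝ) * (Sf y * mk4 l y) ^ (N-1) * (Sf y * l i - Sf y ^ 3 * mk4 l y * y i))
      = ∑ i, sg i * (Sf y * a i - Sf y ^ 3 * mk4 a y * y i)
          * ((N:ℝ) * (Sf y * mk4 l y) ^ (N-1) * (Sf y * l i - Sf y ^ 3 * mk4 l y * y i)) := by
    simp only [mk4]
  rw [hmk, Finset.sum_congr rfl (fun i _ => expand i)]
  simp only [Finset.sum_add_distrib, ← Finset.mul_sum]
  have e1 : ∑ i, sg i * a i * l i = mk4 a l := rfl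
  have e2 : ∑ i, sg i * a i * y i = mk4 a y := rfl
  have e3 : ∑ i, sg i * l i * y i = mk4 l y := rfl
  have e4 : ∑ i, sg i * y i * y i = mk4 y y := rfl
  rw [e1, e2, e3, e4]
  linear_combination ((N:ℝ) * (Sf y * mk4 l y) ^ (N-1) * Sf y ^ 4 * mk4 l y * mk4 a y) * Sf_sq h

lemma mk4_smul_left (t : ℝ) (x y : E4) : mk4 (t • x) y = t * mk4 x y := by
  unfold mk4
  rw [Finset.mul_sum]
  refine Finset.sum_congr rfl fun i _ => ?_
  simp [Pi.smul_apply, smul_eq_mul]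
  ring

lemma ret_one {x : E4} (h : 0 < mk4 x x) : mk4 (ret x) (ret x) = 1 := by
  show mk4 (Sf x • x) (Sf x • x) = 1
  rw [mk4_smul_left, mk4_smul_right, ← mul_assoc, ← sq]
  exact Sf_sq h

lemma Sf_of_one {x : E4} (h : mk4 x x = 1) : Sf x = 1 := by
  rw [Sf, h, Real.sqrt_one, inv_one]

lemma mk4_ret (a x : E4) : mk4 a (ret x) = Sf x * mk4 a x := by
  show mk4 a (Sf x • x) = _
  rw [mk4_smul_right]

lemma bas0 : mk4 (bas 0) (bas 0) = 1 := by
  rw [mk4_bas, sg0]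
  simp [bas]

lemma mk4_comm (x y : E4) : mk4 x y = mk4 y x := by
  unfold mk4
  refine Finset.sum_congr rfl fun i _ => ?_
  ring

lemma master (c c' : ℝ) (N : ℕ) (hN : 1 ≤ N) (l l' : E4)
    (h1 : mk4 l l = 0) (h2 : mk4 l' l' = 0)
    (h3 : mk4 l (bas 0) = 1) (h4 : mk4 l' (bas 0) = 1) :
    D2H (fun y => c * mk4 (grH (trfn l') y) (grH (Cfun N (fun _ => l)) y)
        + c' * (mk4 l' y * Cfun N (fun _ => l) y)) (bas 0)
      + (((N:ℝ)+1)^2 - 2*((N:ℝ)+1)) *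
        (c * mk4 (grH (trfn l') (bas 0)) (grH (Cfun N (fun _ => l)) (bas 0))
          + c' * (mk4 l' (bas 0) * Cfun N (fun _ => l) (bas 0)))
      = (c' - c*N) * (2*N*(mk4 l' l) - 4*((N:ℝ)+1)) := by
  obtain ⟨M, rfl⟩ : ∃ M, N = M + 1 := ⟨N - 1, by omega⟩
  have hpos : (0:ℝ) < mk4 (bas 0) (bas 0) := by rw [bas0]; norm_num
  have hSf0 : Sf (bas 0) = 1 := Sf_of_one bas0
  set p := mk4 l' l with hp
  -- the homogeneous extension of the tested field, as a closed formula on Ur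
  have HzF : ∀ x, 0 < mk4 x x →
      Hz (fun y => c * mk4 (grH (trfn l') y) (grH (Cfun (M+1) (fun _ => l)) y)
        + c' * (mk4 l' y * Cfun (M+1) (fun _ => l) y)) x
      = (c * (↑(M+1) : ℝ) * p) * T l l' M 0 M x
        + (c' - c * (↑(M+1) : ℝ)) * T l l' (M+1) 1 (M+2) x := by
    intro x hx
    have hrx : 0 < mk4 (ret x) (ret x) := by rw [ret_one hx]; norm_num
    show c * mk4 (grH (trfn l') (ret x)) (grH (Cfun (M+1) (fun _ => l)) (ret x))
        + c' * (mk4 l' (ret x) * Cfun (M+1) (fun _ => l) (ret x)) = _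
    rw [mk4_grads hrx h1 l']
    simp only [Cfun_null h1]
    rw [Sf_of_one (ret_one hx), mk4_ret l x, mk4_ret l' x]
    simp only [Nat.add_sub_cancel, T]
    push_cast
    ring
  have key : D2H (fun y => c * mk4 (grH (trfn l') y) (grH (Cfun (M+1) (fun _ => l)) y)
        + c' * (mk4 l' y * Cfun (M+1) (fun _ => l) y)) (bas 0)
      = (c * (↑(M+1) : ℝ) * p) *
          (2*(M:ℝ)*(0:ℝ)*(mk4 l l') * T l l' (M-1) (0-1) M (bas 0)
            + ((M:ℝ)*M - 2*M*M - 2*M*0 - 2*M) * T l l' M 0 (M+2) (bas 0))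
        + (c' - c * (↑(M+1) : ℝ)) *
          (2*((M+1:ℕ):ℝ)*(1:ℝ)*(mk4 l l') * T l l' ((M+1)-1) (1-1) (M+2) (bas 0)
            + (((M+2:ℕ):ℝ)*(M+2:ℕ) - 2*(M+2:ℕ)*(M+1:ℕ) - 2*(M+2:ℕ)*1 - 2*(M+2:ℕ)) * T l l' (M+1) 1 ((M+2)+2) (bas 0)) := by
    unfold D2H
    rw [boxm_congr HzF hpos]
    have := boxm_comb l l' hpos h1 h2 (c * (↑(M+1) : ℝ) * p) (c' - c * (↑(M+1) : ℝ))
      M 0 M (M+1) 1 (M+2)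
    rw [this]
    push_cast
    ring
  rw [key, mk4_grads hpos h1 l']
  simp only [Cfun_null h1]
  have hT : ∀ a b m : ℕ, T l l' a b m (bas 0) = 1 := by
    intro a b m
    simp [T, h3, h4, hSf0]
  simp only [hT, hSf0, h3, h4, Nat.add_sub_cancel]
  have hpll' : mk4 l l' = p := mk4_comm l l'
  rw [hpll']
  push_cast
  ring

end S18

/-
STATEMENT 18: for n ≥ 2 there are no constants c, c' such that
w := c D_aα_μ D^aψ + c' α_μ ψ, with ψ = C(α_{μ₁}⋯α_{μ_{n-1}}), satisfies
(D² + n² − 2n) w = 4n²(n−1) α_μ ψ  (as an identity in the translations α_μ, α_{μ_i}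
and on H).  This is the key step showing that the higher Klein–Gordon remnant radiation
multipoles do not generalize to curved space-time.
-/
theorem stmt18 (n : ℕ) (hn : 2 ≤ n) :
    ¬ ∃ c c' : ℝ, ∀ (kmu : E4) (k : ℕ → E4), ∀ x ∈ Hb,
        D2H (fun y =>
            c * mk4 (grH (trfn kmu) y) (grH (Cfun (n - 1) k) y)
              + c' * (mk4 kmu y * Cfun (n - 1) k y)) x
          + ((n : ℝ)^2 - 2 * n) *
            (c * mk4 (grH (trfn kmu) x) (grH (Cfun (n - 1) k) x)
              + c' * (mk4 kmu x * Cfun (n - 1) k x))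
        = 4 * (n : ℝ)^2 * ((n : ℝ) - 1) * (mk4 kmu x * Cfun (n - 1) k x) := by
  open S18 in
  rintro ⟨c, c', hcc⟩
  set l : E4 := fun j => if j = 3 then 1 else if j = 0 then 1 else 0 with hl
  set l' : E4 := fun j => if j = 3 then -1 else if j = 0 then 1 else 0 with hl'
  have h1 : mk4 l l = 0 := by
    rw [mk4, Fin.sum_univ_four, sg0, sg1, sg2, sg3, hl]
    norm_num [show ((0:Fin 4) = 3) = False from by decide, show ((1:Fin 4) = 3) = False from by decide,
      show ((2:Fin 4) = 3) = False from by decide, show ((1:Fin 4) = 0) = False from by decide,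
      show ((2:Fin 4) = 0) = False from by decide, show ((3:Fin 4) = 0) = False from by decide,
      show ((0:Fin 4) = 0) = True from by decide, show ((3:Fin 4) = 3) = True from by decide]
  have h2 : mk4 l' l' = 0 := by
    rw [mk4, Fin.sum_univ_four, sg0, sg1, sg2, sg3, hl']
    norm_num [show ((0:Fin 4) = 3) = False from by decide, show ((1:Fin 4) = 3) = False from by decide,
      show ((2:Fin 4) = 3) = False from by decide, show ((1:Fin 4) = 0) = False from by decide,
      show ((2:Fin 4) = 0) = False from by decide, show ((3:Fin 4) = 0) = False from by decide,
      show ((0:Fin 4) = 0) = True from by decide, show ((3:Fin 4) = 3) = True from by decide]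
  have h5 : mk4 l' l = 2 := by
    rw [mk4, Fin.sum_univ_four, sg0, sg1, sg2, sg3, hl, hl']
    norm_num [show ((0:Fin 4) = 3) = False from by decide, show ((1:Fin 4) = 3) = False from by decide,
      show ((2:Fin 4) = 3) = False from by decide, show ((1:Fin 4) = 0) = False from by decide,
      show ((2:Fin 4) = 0) = False from by decide, show ((3:Fin 4) = 0) = False from by decide,
      show ((0:Fin 4) = 0) = True from by decide, show ((3:Fin 4) = 3) = True from by decide]
  have h3 : mk4 l (bas 0) = 1 := by
    rw [mk4_bas, sg0, hl]
    norm_num [show ((0:Fin 4) = 3) = False from by decide, show ((1:Fin 4) = 3) = False from by decide,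
      show ((2:Fin 4) = 3) = False from by decide, show ((1:Fin 4) = 0) = False from by decide,
      show ((2:Fin 4) = 0) = False from by decide, show ((3:Fin 4) = 0) = False from by decide,
      show ((0:Fin 4) = 0) = True from by decide, show ((3:Fin 4) = 3) = True from by decide]
  have h4 : mk4 l' (bas 0) = 1 := by
    rw [mk4_bas, sg0, hl']
    norm_num [show ((0:Fin 4) = 3) = False from by decide, show ((1:Fin 4) = 3) = False from by decide,
      show ((2:Fin 4) = 3) = False from by decide, show ((1:Fin 4) = 0) = False from by decide,
      show ((2:Fin 4) = 0) = False from by decide, show ((3:Fin 4) = 0) = False from by decide,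
      show ((0:Fin 4) = 0) = True from by decide, show ((3:Fin 4) = 3) = True from by decide]
  have hb : bas 0 ∈ Hb := bas0
  have hN : 1 ≤ n - 1 := by omega
  have hc : ((n-1 : ℕ):ℝ) = (n:ℝ) - 1 := by
    rw [Nat.cast_sub (by omega)]
    norm_num
  have hAG : ((((n-1 : ℕ)):ℝ)+1)^2 - 2*((((n-1 : ℕ)):ℝ)+1) = (n:ℝ)^2 - 2 * n := by
    rw [hc]; ring
  have E1 := hcc l (fun _ => l) (bas 0) hb
  have E2 := hcc l' (fun _ => l) (bas 0) hb
  have M1 := master c c' (n-1) hN l l h1 h1 h3 h3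
  have M2 := master c c' (n-1) hN l l' h1 h2 h3 h4
  rw [hAG] at M1 M2
  have R1 := M1.symm.trans E1
  have R2 := M2.symm.trans E2
  simp only [Cfun_null h1] at R1 R2
  rw [h1, h3, hc] at R1
  rw [h5, h3, h4, hc] at R2
  have h0 : (c' - c*((n:ℝ)-1)) * (4 - 4*(n:ℝ)) = 0 := by
    linear_combination R1 - R2
  have hnR : (2:ℝ) ≤ (n:ℝ) := by exact_mod_cast hn
  have hne : (4:ℝ) - 4*(n:ℝ) ≠ 0 := by
    have : (4:ℝ) - 4*(n:ℝ) < 0 := by linarith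
    exact ne_of_lt this
  have hXz : c' - c*((n:ℝ)-1) = 0 := by
    rcases mul_eq_zero.mp h0 with h | h
    · exact h
    · exact absurd h hne
  have hz : (4:ℝ) * (n:ℝ)^2 * ((n:ℝ)-1) * ((1:ℝ) * (1:ℝ)^(n-1)) = 0 := by
    rw [← R1, hXz, zero_mul]
  simp only [one_pow, mul_one] at hz
  nlinarith [hz, hnR]
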